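/- The partition function satisfies the pentagonal number recurrence: for all n ≥ 1, p(n) = Σ_{k=1}^{n} (-1)^{k+1} ( p(n - k(3k-1)/2) + p(n - k(3k+1)/2) ), with p(m)=0 for m<0 and p(0)=1. -/

import Mathlib

open Finset ArithmeticFunction

/-- Euler's partition function `p(n)`. -/
def eulerP (n : ℕ) : ℤ := Fintype.card (Nat.Partition n)

/-- `p` extended to the integers by `p(m) = 0` for `m < 0`. -/
def pz (m : ℤ) : ℤ := if m < 0 then 0 else eulerP m.toNat

/-!
Multiplying the partition generating function `∑ p(n) Xⁿ = ∏ᵢ 1 / (1 - X^(i+1))` by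
`∏ᵢ (1 - X^(i+1))` gives `1`, and by the pentagonal number theorem the second product is
`∑_{k ∈ ℤ} (-1)ᵏ X^(k(3k-1)/2)`. For `n ≥ 1` the coefficient of `Xⁿ` in the product is
therefore `∑_{k ∈ ℤ} (-1)ᵏ p(n - k(3k-1)/2) = 0`; isolating `k = 0` and pairing `k` with `-k`
gives the recurrence.
-/

open PowerSeries PowerSeries.WithPiTopology

theorem partitionSeries_mul_pentagonalSeries (R : Type*) [CommRing R] :
    PowerSeries.mk (fun n ↦ (Fintype.card n.Partition : R)) * pentagonalSeries R = 1 := by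
  -- The identity is algebraic; the discrete topology only serves to use infinite products.
  let : TopologicalSpace R := ⊥
  have : DiscreteTopology R := ⟨rfl⟩
  have hP := Nat.Partition.hasProd_powerSeriesMk_card_restricted R (fun _ ↦ True)
  simp only [↓reduceIte, Nat.Partition.restricted, implies_true, filter_true, card_univ] at hP
  have hgeom (i : ℕ) : (∑' j : ℕ, (X : R⟦X⟧) ^ ((i + 1) * j)) * (1 - X ^ (i + 1)) = 1 := by
    simp_rw [pow_mul]
    exact tsum_pow_mul_one_sub_of_constantCoeff_eq_zero (by simp)
  have hprod := hP.mul (hasProd_one_sub_X_pow R)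
  simp only [hgeom] at hprod
  exact hprod.unique hasProd_one

theorem natAbs_le_pentagonal (k : ℤ) : k.natAbs ≤ pentagonal k := by
  have h := two_mul_natCast_pentagonal k
  zify
  rcases (by omega : k ≤ -1 ∨ k = 0 ∨ 1 ≤ k) with hk | rfl | hk
  · rw [abs_of_neg (by omega)]; nlinarith
  · simp
  · rw [abs_of_pos (by omega)]; nlinarith

theorem natCast_pentagonal_neg (k : ℤ) : (pentagonal (-k) : ℤ) = k * (3 * k + 1) / 2 := by
  rw [← two_mul_natCast_pentagonal_neg, Int.mul_ediv_cancel_left _ two_ne_zero]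

theorem apply_zero_eq_neg_sum_Icc_of_hasSum_zero {G : Type*} [AddCommGroup G]
    [TopologicalSpace G] [ContinuousAdd G] [T2Space G] {f : ℤ → G} (hf : HasSum f 0) (n : ℕ)
    (hsupp : ∀ k : ℤ, n < k.natAbs → f k = 0) :
    f 0 = -∑ k ∈ Icc 1 n, (f k + f (-k)) := by
  have hfin : HasSum (fun k : ℕ ↦ f k + f (-k)) (∑ k ∈ Icc 0 n, (f k + f (-k))) :=
    hasSum_sum_of_ne_finset_zero fun k hk ↦ by
      simp only [mem_Icc, not_and, not_le] at hk
      rw [hsupp k (by simpa using hk (Nat.zero_le k)),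
        hsupp (-k) (by simpa using hk (Nat.zero_le k)), add_zero]
  have h := hf.nat_add_neg.unique hfin
  rw [← add_sum_Ioc_eq_sum_Icc (Nat.zero_le n), ← Icc_add_one_left_eq_Ioc] at h
  simp only [Nat.cast_zero, neg_zero] at h
  rw [zero_add, eq_comm, add_assoc, add_eq_left] at h
  exact eq_neg_of_add_eq_zero_left h

theorem pz_sub_eq_zero_of_lt {n : ℤ} {m : ℕ} (h : n < m) : pz (n - m) = 0 :=
  if_pos (by omega)

theorem coeff_mul_X_pow_eq_pz (n m : ℕ) :
    coeff n (PowerSeries.mk (fun n ↦ eulerP n) * X ^ m) = pz (n - m) := by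
  rw [coeff_mul_X_pow', pz]
  by_cases h : m ≤ n
  · rw [if_pos h, if_neg (by omega), coeff_mk, ← Nat.cast_sub h, Int.toNat_natCast]
  · rw [if_neg h, if_pos (by omega)]

theorem hasSum_negOnePow_mul_pz_sub_pentagonal (n : ℕ) :
    HasSum (fun k : ℤ ↦ (k.negOnePow : ℤ) * pz (n - pentagonal k))
      (coeff n (PowerSeries.mk (fun n ↦ eulerP n) * pentagonalSeries ℤ)) := by
  have hS := (hasSum_pentagonalSeries ℤ).mul_left (PowerSeries.mk (fun n ↦ eulerP n))
  rw [hasSum_iff_hasSum_coeff] at hS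
  refine (hS n).congr_fun fun k ↦ ?_
  rw [mul_left_comm, ← zsmul_eq_mul, map_zsmul, smul_eq_mul, coeff_mul_X_pow_eq_pz]

theorem stmt17 (n : ℕ) (hn : 1 ≤ n) :
    eulerP n =
      ∑ k ∈ Finset.Icc 1 n,
        (-1 : ℤ) ^ (k + 1) *
          (pz ((n : ℤ) - k * (3 * k - 1) / 2) + pz ((n : ℤ) - k * (3 * k + 1) / 2)) := by
  have hzero : HasSum (fun k : ℤ ↦ (k.negOnePow : ℤ) * pz (n - pentagonal k)) 0 := by
    have hEuler : PowerSeries.mk (fun n ↦ eulerP n) * pentagonalSeries ℤ = 1 :=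
      partitionSeries_mul_pentagonalSeries ℤ
    have h := hasSum_negOnePow_mul_pz_sub_pentagonal n
    rwa [hEuler, coeff_one, if_neg (by omega)] at h
  have h := apply_zero_eq_neg_sum_Icc_of_hasSum_zero hzero n fun k hk ↦ by
    rw [pz_sub_eq_zero_of_lt (by have := natAbs_le_pentagonal k; omega), mul_zero]
  have hp0 : pz (n - pentagonal 0) = eulerP n := by simp [pentagonal, pz]
  rw [Int.negOnePow_zero, Units.val_one, one_mul, hp0, ← sum_neg_distrib] at h
  rw [h]
  refine sum_congr rfl fun k _ ↦ ?_
  rw [Int.negOnePow_neg, Int.coe_negOnePow_natCast, natCast_pentagonal, natCast_pentagonal_neg,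
    pow_succ]
  ring
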